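/- arXiv:1904.10568 — 5 statements merged into one kernel-verified Lean document; each statement's English description precedes it below -/
import Mathlib

section
/- Let n ≥ 1, A ∈ ℂ^{n×n}, t ∈ ℝ, and A(t) = cos(t)·H + sin(t)·K where H = (A + A*)/2 and K = (A − A*)/(2i). Let λ ∈ ℝ be the largest eigenvalue of the Hermitian matrix A(t). Then λ = sup { Re(e^{−it} z) : z ∈ F(A) }, and this supremum is attained at some point of F(A). -/
open Matrix

/-- The quadratic form x*Ax = ⟨x, Ax⟩ for A ∈ ℂ^{n×n} and x ∈ ℂⁿ. -/
noncomputable def qf {n : ℕ} (A : Matrix (Fin n) (Fin n) ℂ) (x : EuclideanSpace ℂ (Fin n)) : ℂ :=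
  inner ℂ x (Matrix.toEuclideanLin A x)

/-- The field of values (numerical range) F(A) = { x*Ax : ‖x‖ = 1 }. -/
noncomputable def numericalRange {n : ℕ} (A : Matrix (Fin n) (Fin n) ℂ) : Set ℂ :=
  { z | ∃ x : EuclideanSpace ℂ (Fin n), ‖x‖ = 1 ∧ qf A x = z }

/-- The Hermitian part H = (A + A*)/2. -/
noncomputable def hermPart {n : ℕ} (A : Matrix (Fin n) (Fin n) ℂ) : Matrix (Fin n) (Fin n) ℂ :=
  (2 : ℂ)⁻¹ • (A + Aᴴ)

/-- The skew part K = (A − A*)/(2i). -/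
noncomputable def skewPart {n : ℕ} (A : Matrix (Fin n) (Fin n) ℂ) : Matrix (Fin n) (Fin n) ℂ :=
  (2 * Complex.I)⁻¹ • (A - Aᴴ)

/-- The Hermitian matrix flow A(t) = cos(t)·H + sin(t)·K. -/
noncomputable def matFlow {n : ℕ} (A : Matrix (Fin n) (Fin n) ℂ) (t : ℝ) : Matrix (Fin n) (Fin n) ℂ :=
  (Real.cos t : ℂ) • hermPart A + (Real.sin t : ℂ) • skewPart A

/-!
For a unit vector `x`, `Re (e^{-it} x*Ax) = cos t · Re x*Ax + sin t · Im x*Ax = x*A(t)x`, so the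
support function of `F(A)` in direction `t` is the largest real part of a point of `F(A(t))`.
For the Hermitian matrix `A(t)` this is its largest eigenvalue `λ`: a unit eigenvector for `λ`
attains it, and `λ • 1 - A(t)` is positive semidefinite because its spectrum is nonnegative.
-/

open scoped ComplexStarModule ComplexOrder MatrixOrder

section

variable {n : ℕ}

lemma qf_add (A B : Matrix (Fin n) (Fin n) ℂ) (x : EuclideanSpace ℂ (Fin n)) :
    qf (A + B) x = qf A x + qf B x := by
  simp [qf]

lemma qf_sub (A B : Matrix (Fin n) (Fin n) ℂ) (x : EuclideanSpace ℂ (Fin n)) :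
    qf (A - B) x = qf A x - qf B x := by
  simp [qf]

lemma qf_smul (c : ℂ) (A : Matrix (Fin n) (Fin n) ℂ) (x : EuclideanSpace ℂ (Fin n)) :
    qf (c • A) x = c * qf A x := by
  simp [qf]

lemma qf_conjTranspose (A : Matrix (Fin n) (Fin n) ℂ) (x : EuclideanSpace ℂ (Fin n)) :
    qf Aᴴ x = starRingEnd ℂ (qf A x) := by
  rw [qf, Matrix.toEuclideanLin_conjTranspose_eq_adjoint, LinearMap.adjoint_inner_right]
  exact (inner_conj_symm _ _).symm

lemma qf_algebraMap (r : ℝ) {x : EuclideanSpace ℂ (Fin n)} (hx : ‖x‖ = 1) :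
    qf (algebraMap ℝ (Matrix (Fin n) (Fin n) ℂ) r) x = r := by
  rw [IsScalarTower.algebraMap_apply ℝ ℂ, Algebra.algebraMap_eq_smul_one, qf_smul]
  simp [qf, hx]

lemma qf_hermPart (A : Matrix (Fin n) (Fin n) ℂ) (x : EuclideanSpace ℂ (Fin n)) :
    qf (hermPart A) x = (qf A x).re := by
  rw [hermPart, qf_smul, qf_add, qf_conjTranspose, Complex.add_conj]
  push_cast
  ring

lemma qf_skewPart (A : Matrix (Fin n) (Fin n) ℂ) (x : EuclideanSpace ℂ (Fin n)) :
    qf (skewPart A) x = (qf A x).im := by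
  rw [skewPart, qf_smul, qf_sub, qf_conjTranspose, Complex.sub_conj]
  push_cast
  field_simp

lemma qf_matFlow (A : Matrix (Fin n) (Fin n) ℂ) (t : ℝ) (x : EuclideanSpace ℂ (Fin n)) :
    qf (matFlow A t) x = ((Real.cos t * (qf A x).re + Real.sin t * (qf A x).im : ℝ) : ℂ) := by
  rw [matFlow, qf_add, qf_smul, qf_smul, qf_hermPart, qf_skewPart]
  push_cast
  rfl

lemma Matrix.PosSemidef.re_qf_nonneg {M : Matrix (Fin n) (Fin n) ℂ} (hM : M.PosSemidef)
    (x : EuclideanSpace ℂ (Fin n)) : 0 ≤ (qf M x).re :=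
  (Matrix.isPositive_toEuclideanLin_iff.mpr hM).re_inner_nonneg_right x

lemma hermPart_eq_realPart (A : Matrix (Fin n) (Fin n) ℂ) : hermPart A = ℜ A := by
  rw [realPart_apply_coe, hermPart, ← Complex.coe_smul]
  push_cast
  rfl

lemma skewPart_eq_imaginaryPart (A : Matrix (Fin n) (Fin n) ℂ) :
    skewPart A = ℑ A := by
  rw [imaginaryPart_apply_coe, skewPart, ← Complex.coe_smul, smul_smul]
  congr 1
  push_cast
  field_simp
  simp

lemma isSelfAdjoint_matFlow (A : Matrix (Fin n) (Fin n) ℂ) (t : ℝ) :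
    IsSelfAdjoint (matFlow A t) := by
  rw [matFlow, hermPart_eq_realPart, skewPart_eq_imaginaryPart]
  exact (IsSelfAdjoint.smul (Complex.conj_ofReal _) (ℜ A).2).add
    (IsSelfAdjoint.smul (Complex.conj_ofReal _) (ℑ A).2)

lemma re_exp_neg_I_mul_mul (t : ℝ) (z : ℂ) :
    (Complex.exp (-(Complex.I * t)) * z).re = Real.cos t * z.re + Real.sin t * z.im := by
  rw [show -(Complex.I * t) = ((-t : ℝ) : ℂ) * Complex.I by push_cast; ring, Complex.exp_mul_I]
  simp [Complex.mul_re, Complex.cos_ofReal_re, Complex.sin_ofReal_re]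

lemma spectrum_subset_numericalRange (M : Matrix (Fin n) (Fin n) ℂ) :
    spectrum ℂ M ⊆ numericalRange M := by
  intro μ hμ
  rw [← Matrix.spectrum_toLpLin 2, ← Module.End.hasEigenvalue_iff_mem_spectrum] at hμ
  obtain ⟨x, hx⟩ := hμ.exists_hasEigenvector
  have hx0 : ‖x‖ ≠ 0 := norm_ne_zero_iff.mpr hx.2
  set y := (‖x‖ : ℂ)⁻¹ • x
  have hy : ‖y‖ = 1 := by simp [y, norm_smul, hx0]
  have hMy : toEuclideanLin M y = μ • y := by
    rw [map_smul, toEuclideanLin, hx.apply_eq_smul, smul_comm]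
  refine ⟨y, hy, ?_⟩
  rw [qf, hMy, inner_smul_right, inner_self_eq_norm_sq_to_K, hy]
  simp

lemma re_qf_le_of_spectrum_le {M : Matrix (Fin n) (Fin n) ℂ} (hM : IsSelfAdjoint M)
    {lam : ℝ} (hlam : ∀ r ∈ spectrum ℝ M, r ≤ lam) {x : EuclideanSpace ℂ (Fin n)}
    (hx : ‖x‖ = 1) :
    (qf M x).re ≤ lam := by
  have hpsd : (algebraMap ℝ _ lam - M).PosSemidef := le_algebraMap_of_spectrum_le hlam
  simpa [qf_sub, qf_algebraMap lam hx] using hpsd.re_qf_nonneg x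

lemma isGreatest_re_numericalRange {M : Matrix (Fin n) (Fin n) ℂ} (hM : IsSelfAdjoint M)
    {lam : ℝ} (hlam : IsGreatest {r : ℝ | (r : ℂ) ∈ spectrum ℂ M} lam) :
    IsGreatest (Complex.re '' numericalRange M) lam := by
  refine ⟨⟨lam, spectrum_subset_numericalRange M hlam.1, Complex.ofReal_re lam⟩, ?_⟩
  rintro _ ⟨_, ⟨x, hx, rfl⟩, rfl⟩
  exact re_qf_le_of_spectrum_le hM (fun r hr ↦ hlam.2 (spectrum.algebraMap_mem ℂ hr)) hx

lemma image_re_numericalRange_matFlow (A : Matrix (Fin n) (Fin n) ℂ) (t : ℝ) :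
    Complex.re '' numericalRange (matFlow A t) =
      (fun z ↦ (Complex.exp (-(Complex.I * t)) * z).re) '' numericalRange A := by
  ext r
  simp only [Set.mem_image, numericalRange]
  constructor <;> rintro ⟨_, ⟨x, hx, rfl⟩, rfl⟩ <;>
    exact ⟨_, ⟨x, hx, rfl⟩, by rw [qf_matFlow, Complex.ofReal_re, re_exp_neg_I_mul_mul]⟩
end

theorem largest_eigenvalue_eq_max_support_general (n : ℕ)
    (A : Matrix (Fin n) (Fin n) ℂ) (t : ℝ) (lam : ℝ)
    (hlam : IsGreatest {r : ℝ | (r : ℂ) ∈ spectrum ℂ (matFlow A t)} lam) :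
    IsGreatest ((fun z => (Complex.exp (-(Complex.I * t)) * z).re) '' numericalRange A) lam := by
  rw [← image_re_numericalRange_matFlow]
  exact isGreatest_re_numericalRange (isSelfAdjoint_matFlow A t) hlam

/-- the largest eigenvalue λ of the Hermitian matrix A(t) equals
sup { Re(e^{−it}z) : z ∈ F(A) }, and the supremum is attained. -/
theorem largest_eigenvalue_eq_max_support (n : ℕ) (hn : 1 ≤ n)
    (A : Matrix (Fin n) (Fin n) ℂ) (t : ℝ) (lam : ℝ)
    (hlam : IsGreatest {r : ℝ | (r : ℂ) ∈ spectrum ℂ (matFlow A t)} lam) :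
    IsGreatest ((fun z => (Complex.exp (-(Complex.I * t)) * z).re) '' numericalRange A) lam :=
  largest_eigenvalue_eq_max_support_general n A t lam hlam
end

section
/- Let n ≥ 1, A ∈ ℂ^{n×n}, t ∈ ℝ, and A(t) = cos(t)·H + sin(t)·K where H = (A + A*)/2 and K = (A − A*)/(2i). Suppose x ∈ ℂⁿ is a unit vector with A(t)x = λx, where λ ∈ ℝ is the largest eigenvalue of the Hermitian matrix A(t). Then x*Ax ∈ F(A) and for every z ∈ F(A) one has Re(e^{−it} z) ≤ Re(e^{−it} · x*Ax); that is, F(A) lies entirely in the closed half-plane { z ∈ ℂ : Re(e^{−it} z) ≤ λ } whose boundary line passes through the point x*Ax. -/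
open Matrix

/-!
For a unit vector `y`, `y*Hy = Re(y*Ay)` and `y*Ky = Im(y*Ay)`, so `y*A(t)y = Re(e^{-it} y*Ay)`.
In particular `A(t)` is Hermitian, and `λ - A(t)` has nonnegative spectrum, hence is positive
semidefinite; thus `Re(e^{-it} z) ≤ λ` on `F(A)`, with equality at the eigenvector `x`.
-/

open scoped ComplexOrder
open ComplexConjugate

section Hermitian

variable {𝕜 n : Type*} [RCLike 𝕜] [Fintype n] [DecidableEq n] {M : Matrix n n 𝕜}

theorem Matrix.IsHermitian.posSemidef_algebraMap_sub (hM : M.IsHermitian) {c : ℝ}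
    (hc : c ∈ upperBounds {r : ℝ | (r : 𝕜) ∈ spectrum 𝕜 M}) :
    (algebraMap 𝕜 (Matrix n n 𝕜) c - M).PosSemidef := by
  refine posSemidef_iff_isHermitian_and_spectrum_nonneg.2 ⟨?_, ?_⟩
  · exact IsSelfAdjoint.sub (.algebraMap _ (RCLike.conj_ofReal c)) hM
  · rw [← spectrum.singleton_sub_eq, hM.spectrum_eq_image_range]
    rintro _ ⟨_, rfl, _, ⟨_, ⟨i, rfl⟩, rfl⟩, rfl⟩
    have hi : hM.eigenvalues i ≤ c := hc (by simp [hM.spectrum_eq_image_range])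
    simp only [Set.mem_ofPred_eq, sub_nonneg]
    exact_mod_cast hi

theorem Matrix.IsHermitian.re_inner_toEuclideanLin_le (hM : M.IsHermitian) {c : ℝ}
    (hc : c ∈ upperBounds {r : ℝ | (r : 𝕜) ∈ spectrum 𝕜 M})
    (y : EuclideanSpace 𝕜 n) :
    RCLike.re (inner 𝕜 y (toEuclideanLin M y)) ≤ c * ‖y‖ ^ 2 := by
  have hpos := (isPositive_toEuclideanLin_iff.2 (hM.posSemidef_algebraMap_sub hc))
    |>.re_inner_nonneg_right y
  have hshift : toEuclideanLin (algebraMap 𝕜 (Matrix n n 𝕜) c - M) y =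
      (c : 𝕜) • y - toEuclideanLin M y := by
    rw [Algebra.algebraMap_eq_smul_one, map_sub, map_smul, toLpLin_one]
    rfl
  rw [hshift, inner_sub_right, inner_smul_right, inner_self_eq_norm_sq_to_K, map_sub] at hpos
  norm_cast at hpos
  simpa using hpos

end Hermitian

section QuadraticForm

variable {n : ℕ} (A B : Matrix (Fin n) (Fin n) ℂ) (y : EuclideanSpace ℂ (Fin n))

theorem qf_add_s4 : qf (A + B) y = qf A y + qf B y := by
  simp only [qf, map_add, LinearMap.add_apply, inner_add_right]

theorem qf_sub_s4 : qf (A - B) y = qf A y - qf B y := by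
  simp only [qf, map_sub, LinearMap.sub_apply, inner_sub_right]

theorem qf_smul_s4 (c : ℂ) : qf (c • A) y = c * qf A y := by
  simp only [qf, map_smul, LinearMap.smul_apply, inner_smul_right]

theorem qf_conjTranspose_s4 : qf Aᴴ y = conj (qf A y) := by
  rw [qf, qf, toEuclideanLin_conjTranspose_eq_adjoint, LinearMap.adjoint_inner_right,
    inner_conj_symm]

theorem qf_hermPart_s4 : qf (hermPart A) y = (qf A y).re := by
  rw [hermPart, qf_smul_s4, qf_add_s4, qf_conjTranspose_s4, Complex.add_conj]
  push_cast
  field_simp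

theorem qf_skewPart_s4 : qf (skewPart A) y = (qf A y).im := by
  rw [skewPart, qf_smul_s4, qf_sub_s4, qf_conjTranspose_s4, Complex.sub_conj]
  push_cast
  field_simp

theorem qf_matFlow_s4 (t : ℝ) :
    qf (matFlow A t) y = (Complex.exp (-(Complex.I * t)) * qf A y).re := by
  rw [matFlow, qf_add_s4, qf_smul_s4, qf_smul_s4, qf_hermPart_s4, qf_skewPart_s4,
    show -(Complex.I * t) = (-t : ℝ) * Complex.I by push_cast; ring, Complex.exp_mul_I]
  simp [← Complex.ofReal_cos, ← Complex.ofReal_sin]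

theorem qf_eq_of_toEuclideanLin_eq_smul {c : ℂ} (hy : ‖y‖ = 1)
    (h : toEuclideanLin A y = c • y) : qf A y = c := by
  rw [qf, h, inner_smul_right, inner_self_eq_norm_sq_to_K, hy]
  simp

end QuadraticForm

theorem isHermitian_of_forall_conj_qf {n : ℕ} {M : Matrix (Fin n) (Fin n) ℂ}
    (h : ∀ y, conj (qf M y) = qf M y) : M.IsHermitian := by
  rw [← isSymmetric_toEuclideanLin_iff, LinearMap.isSymmetric_iff_inner_map_self_real]
  intro y
  simpa [qf, inner_conj_symm] using (h y).symm

theorem matFlow_isHermitian {n : ℕ} (A : Matrix (Fin n) (Fin n) ℂ) (t : ℝ) :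
    (matFlow A t).IsHermitian :=
  isHermitian_of_forall_conj_qf fun y => by rw [qf_matFlow_s4, Complex.conj_ofReal]

theorem eigenvector_gives_supporting_halfplane_general (n : ℕ)
    (A : Matrix (Fin n) (Fin n) ℂ) (t : ℝ) (lam : ℝ)
    (hlam : IsGreatest {r : ℝ | (r : ℂ) ∈ spectrum ℂ (matFlow A t)} lam)
    (x : EuclideanSpace ℂ (Fin n)) (hx : ‖x‖ = 1)
    (heig : Matrix.toEuclideanLin (matFlow A t) x = (lam : ℂ) • x) :
    qf A x ∈ numericalRange A ∧
      (∀ z ∈ numericalRange A,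
        (Complex.exp (-(Complex.I * t)) * z).re ≤
          (Complex.exp (-(Complex.I * t)) * qf A x).re) ∧
      numericalRange A ⊆ { z : ℂ | (Complex.exp (-(Complex.I * t)) * z).re ≤ lam } := by
  have hbound : ∀ z ∈ numericalRange A, (Complex.exp (-(Complex.I * t)) * z).re ≤ lam := by
    rintro _ ⟨y, hy, rfl⟩
    have h := (matFlow_isHermitian A t).re_inner_toEuclideanLin_le hlam.2 y
    rw [← qf, qf_matFlow_s4] at h
    simpa [hy] using h
  have hx_attains : (Complex.exp (-(Complex.I * t)) * qf A x).re = lam := by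
    have h := qf_eq_of_toEuclideanLin_eq_smul _ _ hx heig
    rw [qf_matFlow_s4] at h
    exact_mod_cast h
  exact ⟨⟨x, hx, rfl⟩, fun z hz => hx_attains ▸ hbound z hz, hbound⟩

/-- if x is a unit eigenvector of A(t) for its largest eigenvalue λ, then
x*Ax ∈ F(A) and Re(e^{−it}z) ≤ Re(e^{−it}·x*Ax) for all z ∈ F(A); i.e. F(A) lies in the
half-plane { z : Re(e^{−it}z) ≤ λ }. -/
theorem eigenvector_gives_supporting_halfplane (n : ℕ) (hn : 1 ≤ n)
    (A : Matrix (Fin n) (Fin n) ℂ) (t : ℝ) (lam : ℝ)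
    (hlam : IsGreatest {r : ℝ | (r : ℂ) ∈ spectrum ℂ (matFlow A t)} lam)
    (x : EuclideanSpace ℂ (Fin n)) (hx : ‖x‖ = 1)
    (heig : Matrix.toEuclideanLin (matFlow A t) x = (lam : ℂ) • x) :
    qf A x ∈ numericalRange A ∧
      (∀ z ∈ numericalRange A,
        (Complex.exp (-(Complex.I * t)) * z).re ≤
          (Complex.exp (-(Complex.I * t)) * qf A x).re) ∧
      numericalRange A ⊆ { z : ℂ | (Complex.exp (-(Complex.I * t)) * z).re ≤ lam } :=
  eigenvector_gives_supporting_halfplane_general n A t lam hlam x hx heig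
end

section
/- (Toeplitz–Hausdorff) For every n ≥ 1 and every A ∈ ℂ^{n×n}, the field of values F(A) is a convex subset of ℂ. -/
/-!
Translating and rescaling `T` acts affinely on its numerical range, so it suffices to show that
the range contains `[0, 1]` once it contains `0 = ⟪x, T x⟫` and `1 = ⟪y, T y⟫` for unit vectors
`x`, `y`. Replacing `y` by a unimodular multiple `ω • y` keeps `⟪y, T y⟫ = 1` and makes the cross
term `⟪x, T y⟫ + ⟪y, T x⟫` real; then `⟪p, T p⟫` is real along the segment `p s = (1 - s) x + s y`,
which avoids `0`, and the intermediate value theorem applied to the Rayleigh quotient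
`⟪p s, T (p s)⟫ / ‖p s‖²` hits every `t ∈ [0, 1]`.
-/

open Matrix

open scoped InnerProductSpace ComplexConjugate
open Set

namespace LinearMap

variable {E : Type*} [NormedAddCommGroup E] [InnerProductSpace ℂ E]

def numericalRange (T : E →ₗ[ℂ] E) : Set ℂ :=
  {z | ∃ x : E, ‖x‖ = 1 ∧ ⟪x, T x⟫_ℂ = z}

variable (T : E →ₗ[ℂ] E)

lemma inner_map_smul_self (a : ℂ) (x : E) :
    ⟪a • x, T (a • x)⟫_ℂ = Complex.normSq a * ⟪x, T x⟫_ℂ := by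
  rw [map_smul, inner_smul_left, inner_smul_right, ← mul_assoc, Complex.normSq_eq_conj_mul_self]

lemma inner_map_ofReal_smul_add_smul (a b : ℝ) (x y : E) :
    ⟪(a : ℂ) • x + (b : ℂ) • y, T ((a : ℂ) • x + (b : ℂ) • y)⟫_ℂ =
      a ^ 2 * ⟪x, T x⟫_ℂ + a * b * (⟪x, T y⟫_ℂ + ⟪y, T x⟫_ℂ) + b ^ 2 * ⟪y, T y⟫_ℂ := by
  simp only [map_add, map_smul, inner_add_left, inner_add_right, inner_smul_left,
    inner_smul_right, Complex.conj_ofReal]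
  ring

lemma inner_map_self_div_norm_sq_mem_numericalRange {x : E} (hx : x ≠ 0) :
    ⟪x, T x⟫_ℂ / (‖x‖ ^ 2 : ℝ) ∈ T.numericalRange := by
  have hx' : ‖x‖ ≠ 0 := norm_ne_zero_iff.mpr hx
  refine ⟨((‖x‖⁻¹ : ℝ) : ℂ) • x, ?_, ?_⟩
  · rw [norm_smul, Complex.norm_real, norm_inv, norm_norm, inv_mul_cancel₀ hx']
  · rw [inner_map_smul_self, Complex.normSq_ofReal, div_eq_inv_mul]
    push_cast
    ring

lemma _root_.Complex.exists_norm_eq_one_im_mul_eq_zero (u : ℂ) :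
    ∃ ω : ℂ, ‖ω‖ = 1 ∧ (ω * u).im = 0 := by
  refine ⟨Complex.exp ((-u.arg : ℝ) * Complex.I), Complex.norm_exp_ofReal_mul_I _, ?_⟩
  nth_rw 2 [← Complex.norm_mul_exp_arg_mul_I u]
  rw [mul_left_comm, ← Complex.exp_add, Complex.ofReal_neg, neg_mul, neg_add_cancel,
    Complex.exp_zero, mul_one, Complex.ofReal_im]

lemma exists_norm_eq_one_im_inner_map_add_eq_zero (x y : E) :
    ∃ ω : ℂ, ‖ω‖ = 1 ∧ (⟪x, T (ω • y)⟫_ℂ + ⟪ω • y, T x⟫_ℂ).im = 0 := by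
  obtain ⟨ω, hω, him⟩ :=
    Complex.exists_norm_eq_one_im_mul_eq_zero (⟪x, T y⟫_ℂ - conj ⟪y, T x⟫_ℂ)
  refine ⟨ω, hω, ?_⟩
  rw [map_smul, inner_smul_right, inner_smul_left]
  simp only [mul_sub, Complex.sub_im, Complex.add_im] at him ⊢
  have hconj : (conj ω * ⟪y, T x⟫_ℂ).im = -(ω * conj ⟪y, T x⟫_ℂ).im := by
    rw [← Complex.conj_im, map_mul, Complex.conj_conj]
  linarith

lemma eq_zero_of_smul_add_smul_eq_zero {x y : E} (hx : ⟪x, T x⟫_ℂ = 0) (hy : ⟪y, T y⟫_ℂ ≠ 0)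
    {a b : ℂ} (h : a • x + b • y = 0) : b = 0 := by
  have hab : a • x = (-b) • y := by rw [neg_smul, eq_neg_iff_add_eq_zero, h]
  have := congrArg (fun v ↦ ⟪v, T v⟫_ℂ) hab
  simp only [inner_map_smul_self, hx, mul_zero, Complex.normSq_neg, zero_eq_mul,
    Complex.ofReal_eq_zero, Complex.normSq_eq_zero] at this
  exact this.resolve_right hy

lemma ofReal_mem_numericalRange_of_zero_mem_of_one_mem (h₀ : (0 : ℂ) ∈ T.numericalRange)
    (h₁ : (1 : ℂ) ∈ T.numericalRange) {t : ℝ} (ht : t ∈ Icc (0 : ℝ) 1) :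
    (t : ℂ) ∈ T.numericalRange := by
  obtain ⟨x, hx, hx₀⟩ := h₀
  obtain ⟨y, hy, hy₁⟩ := h₁
  obtain ⟨ω, hω, hreal⟩ := T.exists_norm_eq_one_im_inner_map_add_eq_zero x y
  set y' := ω • y
  have hy'₁ : ⟪y', T y'⟫_ℂ = 1 := by
    rw [inner_map_smul_self, hy₁, Complex.normSq_eq_norm_sq, hω]
    norm_num
  set c := (⟪x, T y'⟫_ℂ + ⟪y', T x⟫_ℂ).re
  have hc : ⟪x, T y'⟫_ℂ + ⟪y', T x⟫_ℂ = c := Complex.ext rfl hreal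
  set p : ℝ → E := fun s ↦ ((1 - s : ℝ) : ℂ) • x + (s : ℂ) • y'
  have hp : ∀ s, ⟪p s, T (p s)⟫_ℂ = ((s * (1 - s) * c + s ^ 2 : ℝ) : ℂ) := by
    intro s
    simp only [p, inner_map_ofReal_smul_add_smul, hx₀, hy'₁, hc]
    push_cast
    ring
  have hp_ne : ∀ s, p s ≠ 0 := by
    intro s hps
    have hs₀ : (s : ℂ) = 0 :=
      T.eq_zero_of_smul_add_smul_eq_zero hx₀ (by rw [hy'₁]; exact one_ne_zero) hps
    have hp₀ : p 0 = x := by simp [p]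
    rw [Complex.ofReal_eq_zero.mp hs₀, hp₀] at hps
    simp [hps] at hx
  let g : ℝ → ℝ := fun s ↦ (s * (1 - s) * c + s ^ 2) / ‖p s‖ ^ 2
  have hg : ContinuousOn g (Icc 0 1) :=
    ContinuousOn.div (by fun_prop) (by fun_prop) fun s _ ↦
      pow_ne_zero 2 (norm_ne_zero_iff.mpr (hp_ne s))
  have hg₀ : g 0 = 0 := by simp [g]
  have hg₁ : g 1 = 1 := by simp [g, p, y', norm_smul, hω, hy]
  obtain ⟨s, hs, hgs⟩ := intermediate_value_Icc zero_le_one hg (by rw [hg₀, hg₁]; exact ht)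
  have := T.inner_map_self_div_norm_sq_mem_numericalRange (hp_ne s)
  rw [hp, ← Complex.ofReal_div] at this
  rwa [← hgs]

lemma inner_map_smul_sub_smul_id (c z : ℂ) {x : E} (hx : ‖x‖ = 1) :
    ⟪x, (c • (T - z • LinearMap.id) : E →ₗ[ℂ] E) x⟫_ℂ = c * (⟪x, T x⟫_ℂ - z) := by
  rw [LinearMap.smul_apply, LinearMap.sub_apply, LinearMap.smul_apply, LinearMap.id_apply,
    inner_smul_right, inner_sub_right, inner_smul_right, inner_self_eq_norm_sq_to_K, hx]
  simp

lemma mem_numericalRange_smul_sub_smul_id_iff {c : ℂ} (hc : c ≠ 0) (z w : ℂ) :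
    w ∈ (c • (T - z • LinearMap.id)).numericalRange ↔ z + c⁻¹ * w ∈ T.numericalRange := by
  refine exists_congr fun x ↦ and_congr_right fun hx ↦ ?_
  rw [inner_map_smul_sub_smul_id T c z hx]
  constructor <;> intro h <;> field_simp at h ⊢ <;> linear_combination h

theorem convex_numericalRange : Convex ℝ T.numericalRange := by
  intro z₀ hz₀ z₁ hz₁ α β _ hβ hαβ
  obtain rfl : α = 1 - β := by linarith
  by_cases hz : z₀ = z₁
  · rw [hz, ← add_smul, sub_add_cancel, one_smul]
    exact hz₁
  set d := z₁ - z₀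
  have hd : d⁻¹ ≠ 0 := inv_ne_zero (sub_ne_zero.mpr (Ne.symm hz))
  have mem_iff := T.mem_numericalRange_smul_sub_smul_id_iff hd z₀
  simp only [inv_inv] at mem_iff
  have hβ' : (β : ℂ) ∈ (d⁻¹ • (T - z₀ • LinearMap.id)).numericalRange :=
    ofReal_mem_numericalRange_of_zero_mem_of_one_mem _
      ((mem_iff 0).mpr (by simpa using hz₀)) ((mem_iff 1).mpr (by simpa [d] using hz₁))
      ⟨hβ, by linarith⟩
  convert (mem_iff β).mp hβ' using 1
  simp only [Complex.real_smul, d]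
  push_cast
  ring

end LinearMap

theorem numericalRange_convex_general (n : ℕ) (A : Matrix (Fin n) (Fin n) ℂ) :
    Convex ℝ (numericalRange A) :=
  (Matrix.toEuclideanLin A).convex_numericalRange

/-- Toeplitz–Hausdorff: the field of values F(A) is convex. -/
theorem numericalRange_convex (n : ℕ) (hn : 1 ≤ n) (A : Matrix (Fin n) (Fin n) ℂ) :
    Convex ℝ (numericalRange A) :=
  numericalRange_convex_general n A
end

section
/- Let n ≥ 1 and let A ∈ ℂ^{n×n} be normal, i.e. A*A = AA*. Then the field of values of A equals the convex hull of the set of eigenvalues of A: F(A) = conv(spectrum(A)). -/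
/-!
A normal operator `T` is `ℜ T + I • ℑ T` with commuting self-adjoint parts, so the joint
eigenspaces of `ℜ T` and `ℑ T` yield an orthonormal eigenbasis `b` of `T`. In that basis
`⟪x, T x⟫ = ∑ i, ‖b.repr x i‖ ^ 2 • μ i`, and as `x` runs over the unit sphere the weights
`‖b.repr x i‖ ^ 2` run over the whole standard simplex, whose image under `w ↦ ∑ i, w i • μ i`
is the convex hull of the eigenvalues.
-/

open Matrix

open Module.End
open scoped InnerProductSpace ComplexStarModule

theorem convexHull_range_eq_image_stdSimplex {R E ι : Type*} [Field R] [LinearOrder R]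
    [IsStrictOrderedRing R] [AddCommGroup E] [Module R E] [Fintype ι] (v : ι → E) :
    convexHull R (Set.range v) = (fun w : ι → R => ∑ i, w i • v i) '' stdSimplex R ι := by
  classical
  let f : (ι → R) →ₗ[R] E := ∑ i, (LinearMap.proj i).smulRight (v i)
  have hf : ⇑f = fun w => ∑ i, w i • v i := by ext w; simp [f]
  rw [← hf, ← convexHull_basis_eq_stdSimplex, LinearMap.image_convexHull, ← Set.range_comp]
  congr 2
  ext i
  simp [f]

theorem OrthonormalBasis.image_norm_sq_repr_sphere {𝕜 E ι : Type*} [RCLike 𝕜]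
    [NormedAddCommGroup E] [InnerProductSpace 𝕜 E] [Fintype ι] (b : OrthonormalBasis ι 𝕜 E) :
    (fun x i => ‖b.repr x i‖ ^ 2) '' Metric.sphere (0 : E) 1 = stdSimplex ℝ ι := by
  ext w
  constructor
  · rintro ⟨x, hx, rfl⟩
    refine ⟨fun i => by positivity, ?_⟩
    rw [← EuclideanSpace.norm_sq_eq, b.repr.norm_map, mem_sphere_zero_iff_norm.mp hx, one_pow]
  · rintro ⟨hw0, hw1⟩
    refine ⟨b.repr.symm (WithLp.toLp 2 fun i => ((√(w i) : ℝ) : 𝕜)), ?_, ?_⟩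
    · rw [mem_sphere_zero_iff_norm, b.repr.symm.norm_map,
        ← pow_eq_one_iff_of_nonneg (norm_nonneg _) two_ne_zero, EuclideanSpace.norm_sq_eq]
      simpa [Real.sq_sqrt, hw0] using hw1
    · ext i
      simp [Real.sq_sqrt, hw0]

section OrthonormalEigenbasis

variable {𝕜 E ι : Type*} [RCLike 𝕜] [NormedAddCommGroup E] [InnerProductSpace 𝕜 E] [Fintype ι]
  {T : E →ₗ[𝕜] E} (b : OrthonormalBasis ι 𝕜 E) {μ : ι → 𝕜} (hb : ∀ i, T (b i) = μ i • b i)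
include hb

theorem OrthonormalBasis.repr_apply_eq_mul_of_apply_eq_smul (x : E) (i : ι) :
    b.repr (T x) i = μ i * b.repr x i := by
  classical
  conv_lhs => rw [← b.sum_repr x]
  simp [hb, smul_smul, b.repr_self, Pi.single_apply, mul_comm]

theorem OrthonormalBasis.inner_apply_self_eq_sum_norm_sq_smul (x : E) :
    ⟪x, T x⟫_𝕜 = ∑ i, ‖b.repr x i‖ ^ 2 • μ i := by
  rw [← b.repr.inner_map_map, PiLp.inner_apply]
  refine Finset.sum_congr rfl fun i _ => ?_
  rw [b.repr_apply_eq_mul_of_apply_eq_smul hb, RCLike.inner_apply, RCLike.real_smul_eq_coe_mul,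
    RCLike.ofReal_pow, ← RCLike.conj_mul]
  ring

theorem OrthonormalBasis.setOf_inner_apply_self_eq_convexHull_range :
    {z | ∃ x : E, ‖x‖ = 1 ∧ ⟪x, T x⟫_𝕜 = z} = convexHull ℝ (Set.range μ) := by
  rw [convexHull_range_eq_image_stdSimplex, ← b.image_norm_sq_repr_sphere, Set.image_image]
  ext z
  simp [b.inner_apply_self_eq_sum_norm_sq_smul hb]

theorem OrthonormalBasis.spectrum_eq_range_of_apply_eq_smul [FiniteDimensional 𝕜 E] :
    spectrum 𝕜 T = Set.range μ := by
  ext z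
  rw [← hasEigenvalue_iff_mem_spectrum]
  constructor
  · intro hz
    obtain ⟨v, hv⟩ := hz.exists_hasEigenvector
    obtain ⟨i, hi⟩ : ∃ i, b.repr v i ≠ 0 := by
      by_contra! h
      exact hv.2 (b.repr.injective (by ext i; simp [h]))
    refine ⟨i, mul_right_cancel₀ hi ?_⟩
    rw [← b.repr_apply_eq_mul_of_apply_eq_smul hb, hv.apply_eq_smul]
    simp
  · rintro ⟨i, rfl⟩
    exact hasEigenvalue_of_hasEigenvector ⟨mem_eigenspace_iff.2 (hb i), b.orthonormal.ne_zero i⟩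

end OrthonormalEigenbasis

variable {E : Type*} [NormedAddCommGroup E] [InnerProductSpace ℂ E] [FiniteDimensional ℂ E]

theorem LinearMap.exists_orthonormalBasis_apply_eq_smul_of_isStarNormal (T : E →ₗ[ℂ] E)
    [IsStarNormal T] :
    ∃ (b : OrthonormalBasis (Fin (Module.finrank ℂ E)) ℂ E) (μ : Fin (Module.finrank ℂ E) → ℂ),
      ∀ i, T (b i) = μ i • b i := by
  classical
  have hre : (ℜ T : E →ₗ[ℂ] E).IsSymmetric := (LinearMap.isSymmetric_iff_isSelfAdjoint _).2 (ℜ T).2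
  have him : (ℑ T : E →ₗ[ℂ] E).IsSymmetric := (LinearMap.isSymmetric_iff_isSelfAdjoint _).2 (ℑ T).2
  let V (p : ℂ × ℂ) : Submodule ℂ E :=
    eigenspace (ℜ T : E →ₗ[ℂ] E) p.2 ⊓ eigenspace (ℑ T : E →ₗ[ℂ] E) p.1
  have hV : DirectSum.IsInternal V :=
    hre.directSum_isInternal_of_commute him (Commute.realPart_imaginaryPart T)
  -- `subordinateOrthonormalBasis` needs a finite index type, so drop the trivial `V p`.
  let := hV.submodule_iSupIndep.fintypeNeBotOfFiniteDimensional
  have hV₀ : DirectSum.IsInternal fun p : {p // V p ≠ ⊥} => V p :=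
    DirectSum.isInternal_ne_bot_iff.2 hV
  have hV₀' := (hre.orthogonalFamily_eigenspace_inf_eigenspace him).comp
    (Subtype.val_injective (p := fun p => V p ≠ ⊥))
  let p (a : Fin (Module.finrank ℂ E)) : ℂ × ℂ :=
    (hV₀.subordinateOrthonormalBasisIndex rfl a hV₀').1
  refine ⟨hV₀.subordinateOrthonormalBasis rfl hV₀', fun a => (p a).2 + Complex.I * (p a).1,
    fun a => ?_⟩
  obtain ⟨hre_a, him_a⟩ :=
    Submodule.mem_inf.mp (hV₀.subordinateOrthonormalBasis_subordinate rfl a hV₀')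
  rw [mem_eigenspace_iff] at hre_a him_a
  conv_lhs => rw [← realPart_add_I_smul_imaginaryPart T]
  rw [LinearMap.add_apply, LinearMap.smul_apply, hre_a, him_a, add_smul, smul_smul]

theorem LinearMap.setOf_inner_apply_self_eq_convexHull_spectrum (T : E →ₗ[ℂ] E) [IsStarNormal T] :
    {z | ∃ x : E, ‖x‖ = 1 ∧ ⟪x, T x⟫_ℂ = z} = convexHull ℝ (spectrum ℂ T) := by
  obtain ⟨b, μ, hb⟩ := T.exists_orthonormalBasis_apply_eq_smul_of_isStarNormal
  rw [b.spectrum_eq_range_of_apply_eq_smul hb]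
  exact b.setOf_inner_apply_self_eq_convexHull_range hb

theorem numericalRange_of_normal_general (n : ℕ)
    (A : Matrix (Fin n) (Fin n) ℂ) (hA : Aᴴ * A = A * Aᴴ) :
    numericalRange A = convexHull ℝ (spectrum ℂ A) := by
  have : IsStarNormal A := ⟨hA⟩
  have : IsStarNormal (Matrix.toEuclideanLin A) :=
    IsStarNormal.map (LinearMap.toMatrixOrthonormal (EuclideanSpace.basisFun (Fin n) ℂ)).symm A
  rw [← Matrix.spectrum_toLpLin 2]
  exact LinearMap.setOf_inner_apply_self_eq_convexHull_spectrum _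

/-- for a normal matrix A (A*A = AA*), the field of values equals the
convex hull of the spectrum. -/
theorem numericalRange_of_normal (n : ℕ) (hn : 1 ≤ n)
    (A : Matrix (Fin n) (Fin n) ℂ) (hA : Aᴴ * A = A * Aᴴ) :
    numericalRange A = convexHull ℝ (spectrum ℂ A) :=
  numericalRange_of_normal_general n A hA
end

section
/- (Zero stability of the 2_2b difference formula) Consider the real polynomial p₄(X) = 8X⁴ + X³ − 6X² − 5X + 2, the characteristic polynomial of the look-ahead finite difference scheme 2_2b. Then: (a) p₄(X) = (X − 1)(8X³ + 9X² + 3X − 2); (b) 1 is a root of p₄ of multiplicity exactly one; and (c) every complex root z of p₄ with z ≠ 1 satisfies |z| < 1. In particular all roots of p₄ lie in the closed unit disk of ℂ and the only root on the unit circle is the simple root 1, so p₄ is a convergent (zero-stable) characteristic polynomial. -/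
/-!
Dividing out the simple root `1` leaves the cubic `q = 8X³ + 9X² + 3X − 2`. A real root of `q`
lies in `(-1, 1)` by a sign check. A non-real root `z` comes with `z̄`, and `X² − sX + p`, where
`s = z + z̄` and `p = |z|²`, divides `q`; comparing coefficients gives `8(s² − p) + 9s + 3 = 0`
and `(8s + 9)p = −2`, and these force `p < 1`.
-/

open Polynomial ComplexConjugate

theorem Polynomial.rootMultiplicity_X_sub_C_mul_of_eval_ne_zero {R : Type*} [CommRing R]
    {q : R[X]} {a : R} (h : q.eval a ≠ 0) : ((X - C a) * q).rootMultiplicity a = 1 := by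
  rw [mul_comm, ← pow_one (X - C a),
    rootMultiplicity_mul_X_sub_C_pow (fun hq ↦ h (by simp [hq])), rootMultiplicity_eq_zero h]

theorem Complex.eq_zero_of_ofReal_mul_eq_ofReal {z : ℂ} (hz : z.im ≠ 0) {A B : ℝ}
    (h : (A : ℂ) * z = B) : A = 0 ∧ B = 0 := by
  have hA : A = 0 := by
    simpa [hz] using congrArg Complex.im h
  refine ⟨hA, ?_⟩
  simpa [hA, eq_comm] using h

/-- The identities say that `X ^ 2 - 2 * z.re * X + normSq z`, with roots `z` and `conj z`, divides
`a * X ^ 3 + b * X ^ 2 + c * X + d`. -/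
theorem Complex.cubic_vieta_of_im_ne_zero {a b c d : ℝ} {z : ℂ} (hz : z.im ≠ 0)
    (h : a * z ^ 3 + b * z ^ 2 + c * z + d = 0) :
    a * ((2 * z.re) ^ 2 - normSq z) + b * (2 * z.re) + c = 0 ∧
      (a * (2 * z.re) + b) * normSq z = d := by
  set s := 2 * z.re
  set p := normSq z
  have hsq : z ^ 2 = s * z - p := by
    rw [← add_conj, ← mul_conj]; ring
  have hlin : ((a * (s ^ 2 - p) + b * s + c : ℝ) : ℂ) * z = ((a * s + b) * p - d : ℝ) := by
    push_cast
    linear_combination h - (a * z + a * s + b) * hsq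
  obtain ⟨h₁, h₂⟩ := eq_zero_of_ofReal_mul_eq_ofReal hz hlin
  exact ⟨h₁, sub_eq_zero.mp h₂⟩

theorem abs_lt_one_of_cubic_2_2b_eq_zero {x : ℝ} (h : 8 * x ^ 3 + 9 * x ^ 2 + 3 * x - 2 = 0) :
    |x| < 1 := by
  rw [abs_lt]
  constructor <;> nlinarith [sq_nonneg (x + 1), sq_nonneg (x - 1)]

theorem norm_lt_one_of_cubic_2_2b_eq_zero {z : ℂ} (h : 8 * z ^ 3 + 9 * z ^ 2 + 3 * z - 2 = 0) :
    ‖z‖ < 1 := by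
  by_cases hz : z.im = 0
  · rw [← Complex.re_add_im z, hz, Complex.ofReal_zero, zero_mul, add_zero] at h ⊢
    rw [Complex.norm_real, Real.norm_eq_abs]
    exact abs_lt_one_of_cubic_2_2b_eq_zero (by exact_mod_cast h)
  · obtain ⟨h₁, h₂⟩ := Complex.cubic_vieta_of_im_ne_zero (a := 8) (b := 9) (c := 3) (d := -2) hz
      (by push_cast; linear_combination h)
    -- `p ≥ 1` would force `8s + 9 ∈ [-2, 0)`, hence `8p = s(8s + 9) + 3 ≤ 23/4`.
    have : Complex.normSq z < 1 := by nlinarith [Complex.normSq_nonneg z]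
    rwa [Complex.normSq_eq_norm_sq, sq_lt_one_iff₀ (norm_nonneg z)] at this

/-- zero stability of the 2_2b difference formula: for
p₄(X) = 8X⁴ + X³ − 6X² − 5X + 2 we have (a) p₄ = (X−1)(8X³+9X²+3X−2); (b) 1 is a root of
multiplicity exactly one; (c) every complex root z ≠ 1 of p₄ satisfies |z| < 1; in
particular all roots lie in the closed unit disk and the only root on the unit circle is
the simple root 1, so p₄ is convergent (zero stable). -/
theorem zero_stability_2_2b (p : Polynomial ℝ)
    (hp : p = 8 * X ^ 4 + X ^ 3 - 6 * X ^ 2 - 5 * X + 2) :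
    p = (X - 1) * (8 * X ^ 3 + 9 * X ^ 2 + 3 * X - 2) ∧
      p.rootMultiplicity 1 = 1 ∧
      (∀ z : ℂ, Polynomial.aeval z p = 0 → z ≠ 1 → ‖z‖ < 1) ∧
      (∀ z : ℂ, Polynomial.aeval z p = 0 → ‖z‖ ≤ 1) ∧
      (∀ z : ℂ, Polynomial.aeval z p = 0 → ‖z‖ = 1 → z = 1) := by
  have hfac : p = (X - 1) * (8 * X ^ 3 + 9 * X ^ 2 + 3 * X - 2) := by rw [hp]; ring
  have hroots (z : ℂ) (hz : aeval z p = 0) (hz1 : z ≠ 1) : ‖z‖ < 1 := by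
    simp only [hfac, map_mul, map_sub, map_add, map_pow, map_ofNat, aeval_X, map_one] at hz
    exact norm_lt_one_of_cubic_2_2b_eq_zero
      ((mul_eq_zero.mp hz).resolve_left (sub_ne_zero.mpr hz1))
  refine ⟨hfac, ?_, hroots, fun z hz ↦ ?_, fun z hz hz1 ↦ ?_⟩
  · rw [hfac, ← C_1, rootMultiplicity_X_sub_C_mul_of_eval_ne_zero]
    norm_num
  · obtain rfl | hz1 := eq_or_ne z 1
    · simp
    · exact (hroots z hz hz1).le
  · by_contra hne
    exact (hroots z hz hne).ne hz1
end
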